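/- For every g > 0 and R > 0, the function P ↦ R·P / ∫₀^∞ log(1+g·P·z)·e^{−z} dz is strictly increasing on (0,∞). -/

import Mathlib

/-!
For `z > 0` the map `a ↦ log (1 + a z) / a` is strictly decreasing on `(0, ∞)`, being `z` times
a secant slope of the strictly concave function `log` at `1`. Integrating against `e^{-z}` shows
that `a ↦ E[log (1 + a Z)] / a` is strictly decreasing and positive, so its reciprocal, which is
the given function up to the factor `R / g` and the substitution `a = g P`, is strictly increasing.
-/

open Set MeasureTheory Real

/-- `E[log (1 + a Z)]` for an exponentially distributed `Z` with mean `1`. -/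
noncomputable def expectedLogOneAddMul (a : ℝ) : ℝ :=
  ∫ z in Ioi 0, log (1 + a * z) * exp (-z)

theorem setIntegral_lt_setIntegral_of_lt_on {X : Type*} [MeasurableSpace X] {μ : Measure X}
    {s : Set X} {f g : X → ℝ} (hs : MeasurableSet s) (hμs : μ s ≠ 0)
    (hf : IntegrableOn f s μ) (hg : IntegrableOn g s μ) (hlt : ∀ x ∈ s, f x < g x) :
    ∫ x in s, f x ∂μ < ∫ x in s, g x ∂μ := by
  rw [← sub_pos, ← integral_sub hg hf]
  change 0 < ∫ x in s, (g - f) x ∂μ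
  rw [setIntegral_pos_iff_support_of_nonneg_ae _ (hg.sub hf)]
  · refine pos_iff_ne_zero.2 (fun h ↦ hμs (measure_mono_null (fun x hx ↦ ?_) h))
    exact ⟨(sub_pos.2 (hlt x hx)).ne', hx⟩
  · filter_upwards [ae_restrict_mem hs] with x hx using (sub_pos.2 (hlt x hx)).le

theorem strictAntiOn_log_one_add_div_self : StrictAntiOn (fun x ↦ log (1 + x) / x) (Ioi 0) := by
  intro x (hx : 0 < x) y (hy : 0 < y) hxy
  have hmem : ∀ t : ℝ, 0 < t → 1 + t ∈ Ioi (0 : ℝ) := fun t ht ↦ show (0 : ℝ) < 1 + t by linarith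
  have hne : ∀ t : ℝ, 0 < t → 1 + t ≠ 1 := fun t ht ↦ by linarith
  simpa [log_one] using strictConcaveOn_log_Ioi.secant_strict_mono (zero_lt_one' ℝ)
    (hmem x hx) (hmem y hy) (hne x hx) (hne y hy) (by linarith)

theorem strictAntiOn_log_one_add_mul_div {z : ℝ} (hz : 0 < z) :
    StrictAntiOn (fun a ↦ log (1 + a * z) / a) (Ioi 0) := by
  intro a (ha : 0 < a) b (hb : 0 < b) hab
  have key := strictAntiOn_log_one_add_div_self (mul_pos ha hz) (mul_pos hb hz)
    (mul_lt_mul_of_pos_right hab hz)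
  have hscale : ∀ c : ℝ, 0 < c → log (1 + c * z) / c = z * (log (1 + c * z) / (c * z)) :=
    fun c hc ↦ by field_simp
  simp only [hscale a ha, hscale b hb]
  exact mul_lt_mul_of_pos_left key hz

theorem integrableOn_log_one_add_mul_mul_exp_neg {a : ℝ} (ha : 0 ≤ a) :
    IntegrableOn (fun z ↦ log (1 + a * z) * exp (-z)) (Ioi 0) := by
  have hmoment : IntegrableOn (fun z : ℝ ↦ a * (z * exp (-z))) (Ioi 0) := by
    have h := (integrableOn_rpow_mul_exp_neg_rpow (s := 1) (p := 1) (by norm_num) one_pos).const_mul a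
    simp only [rpow_one] at h
    exact h
  refine hmoment.mono' (by fun_prop) ?_
  filter_upwards [ae_restrict_mem measurableSet_Ioi] with z (hz : 0 < z)
  have hlog_nonneg : 0 ≤ log (1 + a * z) := log_nonneg (by nlinarith)
  have hlog_le : log (1 + a * z) ≤ a * z := by
    linarith [log_le_sub_one_of_pos (show 0 < 1 + a * z by nlinarith)]
  rw [norm_of_nonneg (by positivity)]
  calc log (1 + a * z) * exp (-z) ≤ a * z * exp (-z) := by gcongr
    _ = a * (z * exp (-z)) := by ring

theorem expectedLogOneAddMul_pos {a : ℝ} (ha : 0 < a) : 0 < expectedLogOneAddMul a := by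
  have h := setIntegral_lt_setIntegral_of_lt_on measurableSet_Ioi (by simp)
    integrableOn_zero (integrableOn_log_one_add_mul_mul_exp_neg ha.le)
    (fun z (hz : 0 < z) ↦ mul_pos (log_pos (by nlinarith)) (exp_pos _))
  simpa only [integral_zero, expectedLogOneAddMul] using h

theorem strictAntiOn_expectedLogOneAddMul_div :
    StrictAntiOn (fun a ↦ expectedLogOneAddMul a / a) (Ioi 0) := by
  intro a (ha : 0 < a) b (hb : 0 < b) hab
  have hdiv : ∀ c : ℝ, expectedLogOneAddMul c / c =
      ∫ z in Ioi 0, log (1 + c * z) / c * exp (-z) := fun c ↦ by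
    rw [expectedLogOneAddMul, ← integral_div]
    congr 1 with z
    ring
  have hint : ∀ c : ℝ, 0 < c →
      IntegrableOn (fun z ↦ log (1 + c * z) / c * exp (-z)) (Ioi 0) := fun c hc ↦ by
    simp only [div_mul_eq_mul_div]
    exact (integrableOn_log_one_add_mul_mul_exp_neg hc.le).div_const c
  simp only [hdiv]
  exact setIntegral_lt_setIntegral_of_lt_on measurableSet_Ioi (by simp) (hint b hb) (hint a ha)
    fun z (hz : 0 < z) ↦ mul_lt_mul_of_pos_right (strictAntiOn_log_one_add_mul_div hz ha hb hab)
      (exp_pos _)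

theorem power_strictMono (g R : ℝ) (hg : 0 < g) (hR : 0 < R) :
    StrictMonoOn
      (fun P : ℝ => R * P / ∫ z in Ioi (0:ℝ), Real.log (1 + g * P * z) * Real.exp (-z))
      (Ioi 0) := by
  intro P (hP : 0 < P) Q (hQ : 0 < Q) hPQ
  show R * P / expectedLogOneAddMul (g * P) < R * Q / expectedLogOneAddMul (g * Q)
  have hrewrite : ∀ x : ℝ, 0 < x →
      R * x / expectedLogOneAddMul (g * x) = R / g / (expectedLogOneAddMul (g * x) / (g * x)) :=
    fun x hx ↦ by
      have := (expectedLogOneAddMul_pos (mul_pos hg hx)).ne'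
      field_simp
  rw [hrewrite P hP, hrewrite Q hQ]
  have hQpos := expectedLogOneAddMul_pos (mul_pos hg hQ)
  exact div_lt_div_of_pos_left (div_pos hR hg) (div_pos hQpos (mul_pos hg hQ))
    (strictAntiOn_expectedLogOneAddMul_div (mul_pos hg hP) (mul_pos hg hQ)
      (mul_lt_mul_of_pos_left hPQ hg))
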